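/- Let v be a vertex of a graph G with list-assignment L, and let M be a maximum matching in the complement of G[Egal(v)], where Egal(v) ⊆ N(v). If u ∈ StrongEgal(v) \ V(M), where StrongEgal(v) ⊆ Egal(v) consists of vertices u with |L(u)| ≤ |L(v)| + β·Gap(v), and if |L(w)| ≥ ε·ω(w) + (1−ε)(d(w)+1) for all vertices w, G is L-critical, then Gap(u) ≤ ((2+β)Gap(v) + |NotEgal(v)|)/(1−ε), where NotEgal(v) = N(v) \ Egal(v). -/

import Mathlib

open SimpleGraph Finset

/-- `G` restricted to `S` has a proper coloring from the lists `L`. -/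
def ColorableOn {V : Type*} [Fintype V] (G : SimpleGraph V) (L : V → Finset ℕ)
    (S : Finset V) : Prop :=
  ∃ φ : V → ℕ, (∀ v ∈ S, φ v ∈ L v) ∧ ∀ u ∈ S, ∀ v ∈ S, G.Adj u v → φ u ≠ φ v

/-- `omegaAt G v` is the size of a largest clique of `G` containing `v`. -/
noncomputable def omegaAt {V : Type*} [Fintype V] (G : SimpleGraph V) (v : V) : ℕ :=
  sSup {n | ∃ s : Finset V, G.IsNClique n s ∧ v ∈ s}

/-- `Gap G v = d(v) + 1 - ω(v)` as a real number. -/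
noncomputable def Gap {V : Type*} [Fintype V] (G : SimpleGraph V) [DecidableRel G.Adj]
    (v : V) : ℝ :=
  (G.degree v : ℝ) + 1 - (omegaAt G v : ℝ)

/-!
Let `F` be the set of vertices of `Egal(v)` covered by `M` and `K` a maximum clique at `v`.
By maximality of `M`, `Egal(v) \ F` is a clique containing `u`, so `ω(u) ≥ |Egal(v)| - |F|`.
An `M`-partner of a vertex of `F ∩ K` is a non-neighbour of it, hence lies in `F \ K`; thus
`|F| ≤ 2 |F \ K| ≤ 2 |N(v) \ K| = 2 Gap(v)`. Combining `ω(u) ≥ d(v) - |NotEgal(v)| - 2 Gap(v)`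
with `|L(u)| ≤ |L(v)| + β Gap(v) ≤ d(v) + β Gap(v)` and the list hypothesis at `u` gives the bound.
-/

namespace SimpleGraph

variable {V : Type*}

lemma card_le_degree_of_colorableOn_erase [Fintype V] [DecidableEq V] (G : SimpleGraph V)
    [DecidableRel G.Adj] (L : V → Finset ℕ) (hG : ¬ ColorableOn G L univ) (v : V)
    (hv : ColorableOn G L (univ.erase v)) : #(L v) ≤ G.degree v := by
  obtain ⟨φ, hφL, hφ⟩ := hv
  by_contra! hlt
  obtain ⟨c, hcL, hcφ⟩ : ∃ c ∈ L v, c ∉ (G.neighborFinset v).image φ := by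
    by_contra! h
    exact (card_le_card h |>.trans card_image_le).not_gt (by simpa using hlt)
  refine hG ⟨Function.update φ v c, fun w _ => ?_, fun x _ y _ hxy => ?_⟩
  · rcases eq_or_ne w v with rfl | hw
    · simpa using hcL
    · simpa [hw] using hφL w (by simp [hw])
  · rcases eq_or_ne x v with rfl | hx
    · simp only [Function.update_self, Function.update_of_ne hxy.ne.symm]
      exact fun h => hcφ (h ▸ mem_image_of_mem φ (by simpa using hxy))
    rcases eq_or_ne y v with rfl | hy
    · simp only [Function.update_self, Function.update_of_ne hxy.ne]
      exact fun h => hcφ (h.symm ▸ mem_image_of_mem φ (by simpa using hxy.symm))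
    simpa [hx, hy] using hφ x (by simp [hx]) y (by simp [hy]) hxy

section Cliques

variable [Fintype V]

lemma omegaAt_bddAbove (G : SimpleGraph V) (v : V) :
    BddAbove {n | ∃ s : Finset V, G.IsNClique n s ∧ v ∈ s} :=
  ⟨Fintype.card V, fun _ ⟨s, hs, _⟩ => hs.card_eq ▸ s.card_le_univ⟩

lemma IsNClique.le_omegaAt {G : SimpleGraph V} {n : ℕ} {s : Finset V} {w : V}
    (h : G.IsNClique n s) (hw : w ∈ s) : n ≤ omegaAt G w :=
  le_csSup (omegaAt_bddAbove G w) ⟨s, h, hw⟩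

lemma exists_isNClique_omegaAt (G : SimpleGraph V) (w : V) :
    ∃ s : Finset V, G.IsNClique (omegaAt G w) s ∧ w ∈ s :=
  Nat.sSup_mem (s := {n | ∃ s : Finset V, G.IsNClique n s ∧ w ∈ s})
    ⟨1, {w}, isNClique_singleton.2 rfl, mem_singleton_self w⟩ (omegaAt_bddAbove G w)

lemma card_neighborFinset_sdiff_add_card [DecidableEq V] {G : SimpleGraph V}
    [DecidableRel G.Adj] {K : Finset V} {v : V} (hK : G.IsClique K) (hv : v ∈ K) :
    #(G.neighborFinset v \ K) + #K = G.degree v + 1 := by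
  have : G.neighborFinset v ∩ K = K.erase v := by
    ext w
    simp only [mem_inter, mem_neighborFinset, mem_erase]
    exact ⟨fun ⟨h, hw⟩ => ⟨h.ne.symm, hw⟩, fun ⟨h, hw⟩ => ⟨hK hv hw (Ne.symm h), hw⟩⟩
  have hsplit := card_sdiff_add_card_inter (G.neighborFinset v) K
  rw [this, card_neighborFinset_eq_degree] at hsplit
  have := card_erase_add_one hv
  omega

lemma exists_isClique_card_sdiff_eq_gap [DecidableEq V] (G : SimpleGraph V) [DecidableRel G.Adj]
    (v : V) :
    ∃ K : Finset V, G.IsClique K ∧ (#(G.neighborFinset v \ K) : ℝ) = Gap G v := by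
  obtain ⟨K, hK, hv⟩ := exists_isNClique_omegaAt G v
  have h := card_neighborFinset_sdiff_add_card hK.isClique hv
  rw [hK.card_eq] at h
  refine ⟨K, hK.isClique, ?_⟩
  rw [Gap, ← Nat.cast_add_one, ← h]
  push_cast
  ring

end Cliques

section Matching

variable {G M : SimpleGraph V}

lemma adj_unique_sup_edge (hM : ∀ a b c, M.Adj a b → M.Adj a c → b = c) {a b : V}
    (ha : a ∉ M.support) (hb : b ∉ M.support) :
    ∀ x y z, (M ⊔ edge a b).Adj x y → (M ⊔ edge a b).Adj x z → y = z := by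
  have hfree : ∀ x y, M.Adj x y → x ≠ a ∧ x ≠ b := fun x y h =>
    ⟨by rintro rfl; exact ha ⟨y, h⟩, by rintro rfl; exact hb ⟨y, h⟩⟩
  intro x y z hy hz
  simp only [sup_adj, edge_adj] at hy hz
  grind

lemma natCard_edgeSet_sup_edge [Finite V] {a b : V} (hab : a ≠ b) (ha : a ∉ M.support) :
    Nat.card (M ⊔ edge a b).edgeSet = Nat.card M.edgeSet + 1 := by
  have hnew : s(a, b) ∉ M.edgeSet := fun h => ha ⟨b, h⟩
  rw [edgeSet_sup, edgeSet_edge_of_ne hab, Set.union_singleton, Nat.card_coe_set_eq,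
    Nat.card_coe_set_eq, Set.ncard_insert_of_notMem hnew]

lemma isClique_sdiff_support_of_maximum [Finite V] {S : Finset V}
    (hMS : ∀ a b, M.Adj a b → a ∈ S ∧ b ∈ S ∧ ¬ G.Adj a b)
    (hM : ∀ a b c, M.Adj a b → M.Adj a c → b = c)
    (hmax : ∀ M' : SimpleGraph V,
      (∀ a b, M'.Adj a b → a ∈ S ∧ b ∈ S ∧ ¬ G.Adj a b) →
      (∀ a b c, M'.Adj a b → M'.Adj a c → b = c) →
      Nat.card M'.edgeSet ≤ Nat.card M.edgeSet) :
    G.IsClique (↑S \ M.support) := by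
  intro a ha b hb hab
  by_contra hGab
  have hS' : ∀ x y, (M ⊔ edge a b).Adj x y → x ∈ S ∧ y ∈ S ∧ ¬ G.Adj x y := by
    intro x y h
    rcases h with h | h
    · exact hMS x y h
    · obtain ⟨⟨rfl, rfl⟩ | ⟨rfl, rfl⟩, -⟩ := (edge_adj ..).1 h
      · exact ⟨ha.1, hb.1, hGab⟩
      · exact ⟨hb.1, ha.1, fun h => hGab h.symm⟩
  have := hmax _ hS' (adj_unique_sup_edge hM ha.2 hb.2)
  rw [natCard_edgeSet_sup_edge hab ha.2] at this
  omega

lemma card_inter_le_card_sdiff_of_isClique [DecidableEq V] {K F : Finset V}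
    (hK : G.IsClique (K : Set V)) (hMG : ∀ a b, M.Adj a b → ¬ G.Adj a b)
    (hM : ∀ a b c, M.Adj a b → M.Adj a c → b = c) (hF : ∀ a ∈ F, ∃ b ∈ F, M.Adj a b) :
    #(F ∩ K) ≤ #(F \ K) := by
  choose! p hpF hp using hF
  refine card_le_card_of_injOn p (fun a ha => ?_) (fun a ha b hb hab => ?_)
  · obtain ⟨haF, haK⟩ := mem_inter.1 ha
    exact mem_sdiff.2 ⟨hpF a haF, fun hpK => hMG _ _ (hp a haF) (hK haK hpK (hp a haF).ne)⟩
  · exact hM (p a) a b (hp a (mem_inter.1 ha).1).symm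
      (hab ▸ (hp b (mem_inter.1 hb).1).symm)

end Matching

lemma card_sub_two_mul_gap_le_omegaAt [Fintype V] [DecidableEq V] {G M : SimpleGraph V}
    [DecidableRel G.Adj] {v u : V} {S : Finset V} (hS : S ⊆ G.neighborFinset v)
    (hMS : ∀ a b, M.Adj a b → a ∈ S ∧ b ∈ S ∧ ¬ G.Adj a b)
    (hM : ∀ a b c, M.Adj a b → M.Adj a c → b = c)
    (hmax : ∀ M' : SimpleGraph V,
      (∀ a b, M'.Adj a b → a ∈ S ∧ b ∈ S ∧ ¬ G.Adj a b) →
      (∀ a b c, M'.Adj a b → M'.Adj a c → b = c) →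
      Nat.card M'.edgeSet ≤ Nat.card M.edgeSet)
    (hu : u ∈ S) (huM : u ∉ M.support) :
    (#S : ℝ) - 2 * Gap G v ≤ omegaAt G u := by
  classical
  set F := S.filter (· ∈ M.support)
  set U := S.filter (· ∉ M.support)
  have hU : #U ≤ omegaAt G u := by
    have hUclique : G.IsClique (U : Set V) := by
      convert isClique_sdiff_support_of_maximum hMS hM hmax using 1
      ext; simp [U]
    exact IsNClique.le_omegaAt ⟨hUclique, rfl⟩ (mem_filter.2 ⟨hu, huM⟩)
  obtain ⟨K, hK, hKgap⟩ := exists_isClique_card_sdiff_eq_gap G v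
  have hFK : #(F ∩ K) ≤ #(F \ K) := by
    refine card_inter_le_card_sdiff_of_isClique hK (fun a b h => (hMS a b h).2.2) hM ?_
    intro a ha
    obtain ⟨-, b, hab⟩ := mem_filter.1 ha
    exact ⟨b, mem_filter.2 ⟨(hMS a b hab).2.1, a, hab.symm⟩, hab⟩
  have hFKv : #(F \ K) ≤ #(G.neighborFinset v \ K) :=
    card_le_card (sdiff_subset_sdiff (filter_subset _ S |>.trans hS) le_rfl)
  have hUF : #U + #F = #S := by
    rw [add_comm]
    exact card_filter_add_card_filter_not _
  have hF := card_sdiff_add_card_inter F K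
  rw [← hKgap]
  have : #S ≤ omegaAt G u + 2 * #(G.neighborFinset v \ K) := by omega
  have : (#S : ℝ) ≤ omegaAt G u + 2 * #(G.neighborFinset v \ K) := by exact_mod_cast this
  linarith

end SimpleGraph

theorem stmt_13_general {V : Type*} [Fintype V] [DecidableEq V] (G : SimpleGraph V)
    [DecidableRel G.Adj] (L : V → Finset ℕ)
    (β ε : ℝ) (hε : ε ∈ Set.Ioo (0 : ℝ) 1)
    -- G is L-critical:
    (hcrit : ¬ ColorableOn G L univ ∧ ∀ S : Finset V, S ⊂ univ → ColorableOn G L S)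
    -- the list size hypothesis for all vertices:
    (hlist : ∀ w, ε * (omegaAt G w : ℝ) + (1 - ε) * ((G.degree w : ℝ) + 1) ≤
      ((L w).card : ℝ))
    (v : V) (Egal : Finset V) (hE : Egal ⊆ G.neighborFinset v)
    -- M is a matching in the complement of G[Egal(v)]:
    (M : SimpleGraph V)
    (hMsub : ∀ a b, M.Adj a b → a ∈ Egal ∧ b ∈ Egal ∧ ¬ G.Adj a b)
    (hmatch : ∀ a b c, M.Adj a b → M.Adj a c → b = c)
    -- M is maximum among such matchings:
    (hmax : ∀ M' : SimpleGraph V,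
      (∀ a b, M'.Adj a b → a ∈ Egal ∧ b ∈ Egal ∧ ¬ G.Adj a b) →
      (∀ a b c, M'.Adj a b → M'.Adj a c → b = c) →
      Nat.card M'.edgeSet ≤ Nat.card M.edgeSet)
    -- u is a strongly egalitarian neighbor of v not covered by M:
    (u : V) (huE : u ∈ Egal) (huStrong : ((L u).card : ℝ) ≤ ((L v).card : ℝ) + β * Gap G v)
    (huM : u ∉ M.support) :
    Gap G u ≤ ((2 + β) * Gap G v + ((G.neighborFinset v \ Egal).card : ℝ)) / (1 - ε) := by
  have hω := card_sub_two_mul_gap_le_omegaAt hE hMsub hmatch hmax huE huM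
  have hLv : (#(L v) : ℝ) ≤ G.degree v := by
    exact_mod_cast card_le_degree_of_colorableOn_erase G L hcrit.1 v
      (hcrit.2 _ (erase_ssubset (mem_univ v)))
  have hEgal : (#(G.neighborFinset v \ Egal) : ℝ) + #Egal = G.degree v := by
    exact_mod_cast card_sdiff_add_card_eq_card hE
  rw [le_div_iff₀ (sub_pos.2 hε.2)]
  calc Gap G u * (1 - ε)
      = ε * omegaAt G u + (1 - ε) * (G.degree u + 1) - omegaAt G u := by rw [Gap]; ring
    _ ≤ #(L u) - omegaAt G u := by linarith [hlist u]
    _ ≤ G.degree v + β * Gap G v - (#Egal - 2 * Gap G v) := by linarith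
    _ = (2 + β) * Gap G v + #(G.neighborFinset v \ Egal) := by linarith

theorem stmt_13 {V : Type*} [Fintype V] [DecidableEq V] (G : SimpleGraph V)
    [DecidableRel G.Adj] (L : V → Finset ℕ) (hLne : ∀ v, (L v).Nonempty)
    (β ε : ℝ) (hβ : 0 < β) (hε : ε ∈ Set.Ioo (0 : ℝ) 1)
    -- G is L-critical:
    (hcrit : ¬ ColorableOn G L univ ∧ ∀ S : Finset V, S ⊂ univ → ColorableOn G L S)
    -- the list size hypothesis for all vertices:
    (hlist : ∀ w, ε * (omegaAt G w : ℝ) + (1 - ε) * ((G.degree w : ℝ) + 1) ≤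
      ((L w).card : ℝ))
    (v : V) (Egal : Finset V) (hE : Egal ⊆ G.neighborFinset v)
    -- M is a matching in the complement of G[Egal(v)]:
    (M : SimpleGraph V)
    (hMsub : ∀ a b, M.Adj a b → a ∈ Egal ∧ b ∈ Egal ∧ ¬ G.Adj a b)
    (hmatch : ∀ a b c, M.Adj a b → M.Adj a c → b = c)
    -- M is maximum among such matchings:
    (hmax : ∀ M' : SimpleGraph V,
      (∀ a b, M'.Adj a b → a ∈ Egal ∧ b ∈ Egal ∧ ¬ G.Adj a b) →
      (∀ a b c, M'.Adj a b → M'.Adj a c → b = c) →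
      Nat.card M'.edgeSet ≤ Nat.card M.edgeSet)
    -- u is a strongly egalitarian neighbor of v not covered by M:
    (u : V) (huE : u ∈ Egal) (huStrong : ((L u).card : ℝ) ≤ ((L v).card : ℝ) + β * Gap G v)
    (huM : u ∉ M.support) :
    Gap G u ≤ ((2 + β) * Gap G v + ((G.neighborFinset v \ Egal).card : ℝ)) / (1 - ε) :=
  stmt_13_general G L β ε hε hcrit hlist v Egal hE M hMsub hmatch hmax u huE huStrong huM
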